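/- Let c₁, c₂, c₃ ∈ [−1,1] be such that λ_{mn} = (1/4)·(1 + (−1)^m c₁ − (−1)^{m+n} c₂ + (−1)^n c₃) ≥ 0 for all m,n ∈ {0,1} (i.e. the Bell-diagonal state (1/4)(I₄ + Σᵢ cᵢ σᵢ⊗σᵢ) is a valid density matrix). Then the partial transpose of the local-cloning output ρ̃ = (1/4)·(I₄ + (4/9)·Σᵢ cᵢ σᵢ⊗σᵢ) fails to be positive semidefinite (equivalently, ρ̃ is entangled) if and only if |c₁| + |c₂| + |c₃| > 9/4. This characterizes the conic broadcastable regions of Bell-diagonal states under local cloning. -/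

import Mathlib

/-!
Partial transposition of the second qubit fixes `σ₁ ⊗ σ₁` and `σ₃ ⊗ σ₃` and negates `σ₂ ⊗ σ₂`
(as `σ₂ᵀ = -σ₂`), so it maps the Bell-diagonal matrix with parameters `(t₁, t₂, t₃)` to the one
with parameters `(t₁, -t₂, t₃)`. A Bell-diagonal matrix is diagonalised by the four Bell states,
with eigenvalues `λ_{mn}`. For the cloner output `t = (4/9) c`, positivity of the partial
transpose thus amounts to `(4/9) ⟨s, c⟩ ≤ 1` for the four sign vectors `s` with `s₁ s₂ s₃ = -1`,
while validity of `ρ^b` gives `⟨s, c⟩ ≤ 1` for the other four. Since `|c₁| + |c₂| + |c₃|` is the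
largest of the eight values `⟨s, c⟩`, it exceeds `9/4` exactly when one of the first four
inequalities fails.
-/

open Matrix Kronecker
open scoped ComplexOrder

/-- The three Pauli matrices. -/
noncomputable def pauli : Fin 3 → Matrix (Fin 2) (Fin 2) ℂ :=
  ![!![0, 1; 1, 0], !![0, -Complex.I; Complex.I, 0], !![1, 0; 0, -1]]

/-- Partial transpose on the second qubit:
`(ρ^{T₂})_{(i,μ),(j,ν)} = ρ_{(i,ν),(j,μ)}`. -/
noncomputable def ptranspose (ρ : Matrix (Fin 2 × Fin 2) (Fin 2 × Fin 2) ℂ) :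
    Matrix (Fin 2 × Fin 2) (Fin 2 × Fin 2) ℂ :=
  Matrix.of fun p q => ρ (p.1, q.2) (q.1, p.2)

lemma Matrix.kronecker_neg {α l m n p : Type*} [Ring α] (A : Matrix l m α) (B : Matrix n p α) :
    A ⊗ₖ (-B) = -(A ⊗ₖ B) := by
  ext; simp

lemma ptranspose_add (A B : Matrix (Fin 2 × Fin 2) (Fin 2 × Fin 2) ℂ) :
    ptranspose (A + B) = ptranspose A + ptranspose B := rfl

lemma ptranspose_smul (z : ℂ) (A : Matrix (Fin 2 × Fin 2) (Fin 2 × Fin 2) ℂ) :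
    ptranspose (z • A) = z • ptranspose A := rfl

lemma ptranspose_one : ptranspose 1 = 1 := by
  ext p q
  simp [ptranspose, one_apply, Prod.ext_iff, eq_comm]

lemma ptranspose_kronecker (A B : Matrix (Fin 2) (Fin 2) ℂ) :
    ptranspose (A ⊗ₖ B) = A ⊗ₖ Bᵀ := rfl

lemma transpose_pauli_zero : (pauli 0)ᵀ = pauli 0 := by
  ext i j; fin_cases i <;> fin_cases j <;> rfl

lemma transpose_pauli_one : (pauli 1)ᵀ = -pauli 1 := by
  ext i j; fin_cases i <;> fin_cases j <;> simp [pauli]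

lemma transpose_pauli_two : (pauli 2)ᵀ = pauli 2 := by
  ext i j; fin_cases i <;> fin_cases j <;> rfl

noncomputable def bellDiagonal (c₁ c₂ c₃ : ℝ) : Matrix (Fin 2 × Fin 2) (Fin 2 × Fin 2) ℂ :=
  (1/4 : ℂ) • (1 + ((c₁ : ℂ) • (pauli 0 ⊗ₖ pauli 0) + (c₂ : ℂ) • (pauli 1 ⊗ₖ pauli 1)
      + (c₃ : ℂ) • (pauli 2 ⊗ₖ pauli 2)))

noncomputable def bellEigenvalue (c₁ c₂ c₃ : ℝ) (m n : Fin 2) : ℝ :=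
  (1/4 : ℝ) * (1 + (-1)^(m : ℕ) * c₁ - (-1)^((m : ℕ) + (n : ℕ)) * c₂ + (-1)^(n : ℕ) * c₃)

/-- The unnormalised Bell states `Φ⁺, Ψ⁺, Φ⁻, Ψ⁻` for `mn = 00, 01, 10, 11`; `bellVector m n` is
the eigenvector of `bellDiagonal` for `bellEigenvalue · · · m n`. -/
def bellVector (m n : Fin 2) : Fin 2 × Fin 2 → ℂ :=
  fun p => if p.2 = p.1 + n then (-1) ^ ((m : ℕ) * (p.1 : ℕ)) else 0

lemma ptranspose_bellDiagonal (c₁ c₂ c₃ : ℝ) :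
    ptranspose (bellDiagonal c₁ c₂ c₃) = bellDiagonal c₁ (-c₂) c₃ := by
  simp only [bellDiagonal, ptranspose_smul, ptranspose_add, ptranspose_one,
    ptranspose_kronecker, transpose_pauli_zero, transpose_pauli_one, transpose_pauli_two,
    kronecker_neg, smul_neg, Complex.ofReal_neg, neg_smul]

lemma bellDiagonal_mul (η c₁ c₂ c₃ : ℝ) :
    bellDiagonal (η * c₁) (η * c₂) (η * c₃) =
      (1/4 : ℂ) • (1 + (η : ℂ) • ((c₁ : ℂ) • (pauli 0 ⊗ₖ pauli 0)
        + (c₂ : ℂ) • (pauli 1 ⊗ₖ pauli 1) + (c₃ : ℂ) • (pauli 2 ⊗ₖ pauli 2))) := by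
  simp only [bellDiagonal, Complex.ofReal_mul, smul_add, mul_smul]

lemma bellDiagonal_eq_sum (c₁ c₂ c₃ : ℝ) :
    bellDiagonal c₁ c₂ c₃ = ∑ m, ∑ n, ((bellEigenvalue c₁ c₂ c₃ m n / 2 : ℝ) : ℂ) •
      vecMulVec (bellVector m n) (star (bellVector m n)) := by
  ext ⟨i, μ⟩ ⟨j, ν⟩
  fin_cases i <;> fin_cases μ <;> fin_cases j <;> fin_cases ν <;>
    simp [bellDiagonal, bellEigenvalue, bellVector, pauli, Fin.sum_univ_two, one_apply,
      vecMulVec_apply] <;> ring_nf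

lemma star_bellVector_dotProduct_mulVec (c₁ c₂ c₃ : ℝ) (m n : Fin 2) :
    star (bellVector m n) ⬝ᵥ (bellDiagonal c₁ c₂ c₃ *ᵥ bellVector m n) =
      2 * (bellEigenvalue c₁ c₂ c₃ m n : ℂ) := by
  fin_cases m <;> fin_cases n <;>
    simp [bellDiagonal, bellEigenvalue, bellVector, pauli, dotProduct, mulVec,
      Fintype.sum_prod_type, Fin.sum_univ_two, one_apply] <;> ring_nf

lemma bellDiagonal_posSemidef_iff (c₁ c₂ c₃ : ℝ) :
    (bellDiagonal c₁ c₂ c₃).PosSemidef ↔ ∀ m n, 0 ≤ bellEigenvalue c₁ c₂ c₃ m n := by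
  refine ⟨fun h m n => ?_, fun h => ?_⟩
  · have := h.dotProduct_mulVec_nonneg (bellVector m n)
    rw [star_bellVector_dotProduct_mulVec] at this
    have h2 : (0 : ℝ) ≤ 2 * bellEigenvalue c₁ c₂ c₃ m n := by exact_mod_cast this
    linarith
  · rw [bellDiagonal_eq_sum]
    refine posSemidef_sum _ fun m _ => posSemidef_sum _ fun n _ =>
      (posSemidef_vecMulVec_self_star _).smul ?_
    exact_mod_cast div_nonneg (h m n) zero_le_two

lemma exists_bellEigenvalue_neg_iff {c₁ c₂ c₃ η : ℝ}
    (hc : ∀ m n, 0 ≤ bellEigenvalue c₁ c₂ c₃ m n) (hη : 0 < η) (hη₁ : η ≤ 1) :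
    (∃ m n, bellEigenvalue (η * c₁) (-(η * c₂)) (η * c₃) m n < 0) ↔
      1 < η * (|c₁| + |c₂| + |c₃|) := by
  simp only [Fin.forall_fin_two, Fin.exists_fin_two, bellEigenvalue] at hc ⊢
  norm_num at hc ⊢
  obtain ⟨⟨h00, h01⟩, h10, h11⟩ := hc
  rcases abs_cases c₁ with ⟨e1, _⟩ | ⟨e1, _⟩ <;>
    rcases abs_cases c₂ with ⟨e2, _⟩ | ⟨e2, _⟩ <;>
    rcases abs_cases c₃ with ⟨e3, _⟩ | ⟨e3, _⟩ <;>
    rw [e1, e2, e3] <;> constructor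
  all_goals first
    | rintro ((h | h) | h | h) <;> nlinarith
    | intro h; by_contra! hne; nlinarith

theorem belldiagonal_broadcasting_range_local_general (c₁ c₂ c₃ : ℝ)
    (hEig : ∀ m n : Fin 2, 0 ≤ (1/4 : ℝ) * (1 + (-1)^(m : ℕ) * c₁
        - (-1)^((m : ℕ) + (n : ℕ)) * c₂ + (-1)^(n : ℕ) * c₃)) :
    ¬ (ptranspose ((1/4 : ℂ) • ((1 : Matrix (Fin 2 × Fin 2) (Fin 2 × Fin 2) ℂ)
        + (4/9 : ℂ) • ((c₁ : ℂ) • (pauli 0 ⊗ₖ pauli 0) + (c₂ : ℂ) • (pauli 1 ⊗ₖ pauli 1)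
            + (c₃ : ℂ) • (pauli 2 ⊗ₖ pauli 2))))).PosSemidef
    ↔ 9/4 < |c₁| + |c₂| + |c₃| := by
  have hρ := bellDiagonal_mul (4/9) c₁ c₂ c₃
  push_cast at hρ
  rw [← hρ, ptranspose_bellDiagonal, bellDiagonal_posSemidef_iff]
  simp only [not_forall, not_le]
  rw [exists_bellEigenvalue_neg_iff hEig (by norm_num) (by norm_num)]
  constructor <;> intro h <;> linarith

/-- Broadcastable region of Bell-diagonal states under local cloning.  If the
Bell-diagonal state with parameters `c₁, c₂, c₃ ∈ [−1,1]` is a valid density matrix (all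
eigenvalues `λ_{mn} ≥ 0`), then the nonlocal output `ρ̃₁₄ = {0, 0, (4/9)T^b}` of the
Buzek–Hillery local optimal cloner has non-positive-semidefinite partial transpose
(i.e. is entangled) iff `|c₁| + |c₂| + |c₃| > 9/4`. -/
theorem belldiagonal_broadcasting_range_local (c₁ c₂ c₃ : ℝ)
    (hc1 : c₁ ∈ Set.Icc (-1 : ℝ) 1) (hc2 : c₂ ∈ Set.Icc (-1 : ℝ) 1)
    (hc3 : c₃ ∈ Set.Icc (-1 : ℝ) 1)
    (hEig : ∀ m n : Fin 2, 0 ≤ (1/4 : ℝ) * (1 + (-1)^(m : ℕ) * c₁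
        - (-1)^((m : ℕ) + (n : ℕ)) * c₂ + (-1)^(n : ℕ) * c₃)) :
    ¬ (ptranspose ((1/4 : ℂ) • ((1 : Matrix (Fin 2 × Fin 2) (Fin 2 × Fin 2) ℂ)
        + (4/9 : ℂ) • ((c₁ : ℂ) • (pauli 0 ⊗ₖ pauli 0) + (c₂ : ℂ) • (pauli 1 ⊗ₖ pauli 1)
            + (c₃ : ℂ) • (pauli 2 ⊗ₖ pauli 2))))).PosSemidef
    ↔ 9/4 < |c₁| + |c₂| + |c₃| :=
  belldiagonal_broadcasting_range_local_general c₁ c₂ c₃ hEig
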